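/- Let k ≥ 2 be an integer, A a nontrivial closed class of decision tables from M_k^∞, ψ a bounded complexity measure, T ∈ A, n ∈ ℕ, and l_ψ(T,n) > 0. Then there exists a mapping ν from E_k^{W(T)} to nonempty finite subsets of ℕ such that the table T* = J(ν,T) satisfies ψ^a(T*) ≤ n and ψ^d(T*) ≥ log_k l_ψ(T,n). -/

import Mathlib

open Classical

noncomputable section

/-- A decision table with many-valued decisions over `E_k = {0,…,k-1}`.
Columns are labeled with attributes `f_i` identified with their indices `i : ℕ`;
a row is a function `ℕ → ℕ` supported on the attribute set, with values `< k`;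
each row is labeled with a nonempty finite set of decisions. -/
structure Table (k : ℕ) where
  attrs : Finset ℕ
  rows : Finset (ℕ → ℕ)
  dec : (ℕ → ℕ) → Finset ℕ
  rows_mem : ∀ r ∈ rows, (∀ i ∈ attrs, r i < k) ∧ (∀ i ∉ attrs, r i = 0)
  dec_nonempty : ∀ r ∈ rows, (dec r).Nonempty

namespace Table

variable {k : ℕ}

/-- a row satisfies a word (a list of (attribute, value) pairs) -/
def rowSat (r : ℕ → ℕ) (α : List (ℕ × ℕ)) : Prop := ∀ q ∈ α, r q.1 = q.2

/-- the word belongs to `Ω_k(T)` -/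
def wordOk (T : Table k) (α : List (ℕ × ℕ)) : Prop := ∀ q ∈ α, q.1 ∈ T.attrs ∧ q.2 < k

/-- the subtable `Tα` -/
def applyWord (T : Table k) (α : List (ℕ × ℕ)) : Table k where
  attrs := T.attrs
  rows := T.rows.filter (fun r => rowSat r α)
  dec := T.dec
  rows_mem := fun r hr => T.rows_mem r (Finset.mem_filter.mp hr).1
  dec_nonempty := fun r hr => T.dec_nonempty r (Finset.mem_filter.mp hr).1

/-- `T ∈ M_k^{∞c}` : the table has a common decision -/
def hasCommon (T : Table k) : Prop := ∃ d : ℕ, ∀ r ∈ T.rows, d ∈ T.dec r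

/-- `N(T)` : number of rows -/
def NT (T : Table k) : ℕ := T.rows.card

/-- `W(T)` : number of columns (`0` for the empty table `Λ`) -/
def WT (T : Table k) : ℕ := if T.rows = ∅ then 0 else T.attrs.card

/-- the closure `[T]` of `T` under removal of columns and changing of decisions:
`Q = J(ν, I(D,T))` for some `D ⊆ At(T)` and some `ν` (the decision labeling of `Q`
on its rows is arbitrary, i.e. is the arbitrary `ν` with nonempty finite values). -/
def closureT (T : Table k) : Set (Table k) :=
  {Q | ∃ D : Finset ℕ, D ⊆ T.attrs ∧ Q.attrs = T.attrs \ D ∧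
      Q.rows = T.rows.image (fun r i => if i ∈ T.attrs \ D then r i else 0)}

end Table

/-- a closed class: `[A] = A` -/
def IsClosedClass {k : ℕ} (A : Set (Table k)) : Prop := ∀ T ∈ A, Table.closureT T ⊆ A

/-- a nontrivial class: contains nonempty tables -/
def NontrivialClass {k : ℕ} (A : Set (Table k)) : Prop := ∃ T ∈ A, T.rows.Nonempty

/-- the part of a `k`-decision tree below one edge leaving the root -/
inductive DTree (k : ℕ) : Type
  | leaf (d : ℕ) : DTree k
  | node (a : ℕ) (n : ℕ) (lab : Fin (n + 1) → ℕ) (ch : Fin (n + 1) → DTree k) : DTree k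

namespace DTree

variable {k : ℕ}

/-- the set of pairs (π(τ), terminal decision) over complete paths τ -/
def paths : DTree k → Set (List (ℕ × ℕ) × ℕ)
  | leaf d => {([], d)}
  | node a _ lab ch =>
      ⋃ i, (fun p : List (ℕ × ℕ) × ℕ => ((a, lab i) :: p.1, p.2)) '' paths (ch i)

/-- edge labels belong to `E_k` -/
def wf : DTree k → Prop
  | leaf _ => True
  | node _ _ lab ch => (∀ i, lab i < k) ∧ ∀ i, wf (ch i)

/-- edges leaving any node are labeled with pairwise different numbers -/
def det : DTree k → Prop
  | leaf _ => True
  | node _ _ lab ch => Function.Injective lab ∧ ∀ i, det (ch i)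

/-- the set of attributes attached to nodes -/
def attrs : DTree k → Finset ℕ
  | leaf _ => ∅
  | node a _ _ ch => insert a (Finset.univ.biUnion fun i => attrs (ch i))

end DTree

/-- a `k`-decision tree: an unlabeled root with `n+1` unlabeled edges leaving it -/
structure KTree (k : ℕ) where
  n : ℕ
  sub : Fin (n + 1) → DTree k

namespace KTree

variable {k : ℕ}

def paths (Γ : KTree k) : Set (List (ℕ × ℕ) × ℕ) := ⋃ i, (Γ.sub i).paths

def wf (Γ : KTree k) : Prop := ∀ i, (Γ.sub i).wf

def attrs (Γ : KTree k) : Finset ℕ := Finset.univ.biUnion fun i => (Γ.sub i).attrs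

end KTree

/-- partially bounded complexity measure on words over `P` -/
structure PBCM where
  toFun : List ℕ → ℕ
  pos : ∀ α, toFun α = 0 ↔ α = []
  perm : ∀ α β, List.Perm α β → toFun α = toFun β
  mono : ∀ α β, toFun α ≤ toFun (α ++ β)
  subadd : ∀ α β, toFun (α ++ β) ≤ toFun α + toFun β

/-- bounded complexity measure -/
structure BCM extends PBCM where
  bdd : ∀ α, α.length ≤ toFun α

/-- extension of ψ to words over pairs `(f_i, δ)` -/
def PBCM.onWord (ψ : PBCM) (α : List (ℕ × ℕ)) : ℕ := ψ.toFun (α.map Prod.fst)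

/-- extension of ψ to finite sets of attributes -/
def PBCM.onSet (ψ : PBCM) (s : Finset ℕ) : ℕ := ψ.toFun (s.sort (· ≤ ·))

/-- the depth `h` -/
def depthCM : BCM where
  toFun := List.length
  pos := fun α => List.length_eq_zero_iff
  perm := fun _ _ h => h.length_eq
  mono := fun α β => by simp
  subadd := fun α β => by simp
  bdd := fun _ => le_rfl

/-- `ψ(Γ)` : complexity of a decision tree -/
def treeComp {k : ℕ} (ψ : PBCM) (Γ : KTree k) : ℕ :=
  sSup {c | ∃ p ∈ Γ.paths, ψ.onWord p.1 = c}

/-- `Γ` is a nondeterministic decision tree for the (nonempty) table `T` -/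
def isNDT {k : ℕ} (T : Table k) (Γ : KTree k) : Prop :=
  T.rows.Nonempty ∧ Γ.wf ∧ Γ.attrs ⊆ T.attrs ∧
  (∀ r ∈ T.rows, ∃ p ∈ Γ.paths, Table.rowSat r p.1) ∧
  (∀ p ∈ Γ.paths, (T.applyWord p.1).rows = ∅ ∨ ∀ r ∈ (T.applyWord p.1).rows, p.2 ∈ T.dec r)

/-- `Γ` is a deterministic decision tree for `T` -/
def isDDT {k : ℕ} (T : Table k) (Γ : KTree k) : Prop :=
  isNDT T Γ ∧ Γ.n = 0 ∧ ∀ i, (Γ.sub i).det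

/-- `ψ^a(T)` -/
def psiA {k : ℕ} (ψ : PBCM) (T : Table k) : ℕ :=
  sInf {c | ∃ Γ : KTree k, isNDT T Γ ∧ treeComp ψ Γ = c}

/-- `ψ^d(T)` -/
def psiD {k : ℕ} (ψ : PBCM) (T : Table k) : ℕ :=
  sInf {c | ∃ Γ : KTree k, isDDT T Γ ∧ treeComp ψ Γ = c}

/-- `m_ψ(T)` -/
def mpsi {k : ℕ} (ψ : PBCM) (T : Table k) : ℕ :=
  if T.rows = ∅ then 0 else T.attrs.sup fun i => ψ.toFun [i]

/-- `W_ψ(T)` -/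
def Wpsi {k : ℕ} (ψ : PBCM) (T : Table k) : ℕ :=
  if T.rows = ∅ then 0 else ψ.onSet T.attrs

/-- a tuple `δ̄ ∈ E_k^{|At(T)|}` -/
def validTuple {k : ℕ} (T : Table k) (δ : ℕ → ℕ) : Prop :=
  (∀ i ∈ T.attrs, δ i < k) ∧ ∀ i ∉ T.attrs, δ i = 0

/-- `M_ψ(T, δ̄)` -/
def MpsiAt {k : ℕ} (ψ : PBCM) (T : Table k) (δ : ℕ → ℕ) : ℕ :=
  sInf {p | ∃ s : Finset ℕ, s ⊆ T.attrs ∧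
    (T.applyWord ((s.sort (· ≤ ·)).map fun i => (i, δ i))).hasCommon ∧ ψ.onSet s = p}

/-- `M_ψ(T)` -/
def Mpsi {k : ℕ} (ψ : PBCM) (T : Table k) : ℕ :=
  if T.hasCommon then 0 else sSup {p | ∃ δ, validTuple T δ ∧ MpsiAt ψ T δ = p}

/-- `U` is a `(ψ,n)`-cover of `T` -/
def isCover {k : ℕ} (ψ : PBCM) (n : ℕ) (T : Table k) (U : Finset (List (ℕ × ℕ))) : Prop :=
  (∀ α ∈ U, T.wordOk α ∧ ψ.onWord α ≤ n) ∧ ∀ r ∈ T.rows, ∃ α ∈ U, Table.rowSat r α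

/-- `U` is an irreducible `(ψ,n)`-cover of `T` -/
def isIrredCover {k : ℕ} (ψ : PBCM) (n : ℕ) (T : Table k) (U : Finset (List (ℕ × ℕ))) : Prop :=
  isCover ψ n T U ∧ ∀ V ⊂ U, ¬ isCover ψ n T V

/-- `l_ψ(T,n)` : maximum cardinality of an irreducible `(ψ,n)`-cover -/
def lpsi {k : ℕ} (ψ : PBCM) (T : Table k) (n : ℕ) : ℕ :=
  sSup {c | ∃ U, isIrredCover ψ n T U ∧ U.card = c}

/-- the set `{ψ^d(T) : T ∈ A, ψ^a(T) ≤ n}`; `H^∞_{ψ,A}(n)` is defined iff this set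
is finite, and is then its maximum -/
def HSet {k : ℕ} (ψ : PBCM) (A : Set (Table k)) (n : ℕ) : Set ℕ :=
  {c | ∃ T ∈ A, psiA ψ T ≤ n ∧ psiD ψ T = c}

/-- `H^∞_{ψ,A}(n)` (as the max = sSup of the finite set `HSet ψ A n`) -/
def Hfun {k : ℕ} (ψ : PBCM) (A : Set (Table k)) (n : ℕ) : ℕ := sSup (HSet ψ A n)

/-- the set `{l_ψ(T,n) : T ∈ A}` -/
def LSet {k : ℕ} (ψ : PBCM) (A : Set (Table k)) (n : ℕ) : Set ℕ :=
  {c | ∃ T ∈ A, lpsi ψ T n = c}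

/-- `L_{ψ,A}(n)` -/
def Lfun {k : ℕ} (ψ : PBCM) (A : Set (Table k)) (n : ℕ) : ℕ := sSup (LSet ψ A n)

/-- `H_D` for an infinite `D ⊆ ℕ` : `H_D(n)` is the largest element of `D` that is `≤ n`
(and `0` if there is none) -/
def HDfun (D : Set ℕ) (n : ℕ) : ℕ := sSup {d | d ∈ D ∧ d ≤ n}

/-- a complete table from `M_2^∞` -/
def isComplete (Q : Table 2) : Prop := Q.NT = 2 ^ Q.attrs.card

/-- `Z(T)` : maximum number of columns in a complete table from `[T]` (`0` if none) -/
def Zt (T : Table 2) : ℕ := sSup {c | ∃ Q ∈ Table.closureT T, isComplete Q ∧ Q.WT = c}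

/-- the set `{Z(T) : T ∈ A_ψ(n)}` -/
def ZSet (ψ : PBCM) (A : Set (Table 2)) (n : ℕ) : Set ℕ :=
  {c | ∃ T ∈ A, mpsi ψ T ≤ n ∧ Zt T = c}

/-- `Z_{ψ,A}(n)` -/
def Zfun (ψ : PBCM) (A : Set (Table 2)) (n : ℕ) : ℕ := sSup (ZSet ψ A n)

/-- annihilating word for `T` -/
def isAnnih (T : Table 2) (α : List (ℕ × ℕ)) : Prop :=
  T.wordOk α ∧ (∀ p ∈ α, ∀ q ∈ α, p.1 = q.1 → p.2 = q.2) ∧ (T.applyWord α).rows = ∅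

/-- irreducible annihilating word for `T` -/
def isIrredAnnih (T : Table 2) (α : List (ℕ × ℕ)) : Prop :=
  isAnnih T α ∧ ∀ β, β.Sublist α → β ≠ α → ¬ isAnnih T β

/-- `G(T)` : maximum length of an irreducible annihilating word (`0` if none) -/
def Gt (T : Table 2) : ℕ := sSup {c | ∃ α, isIrredAnnih T α ∧ α.length = c}

/-- the set `{G(T) : T ∈ A_ψ(n)}` -/
def GSet (ψ : PBCM) (A : Set (Table 2)) (n : ℕ) : Set ℕ :=
  {c | ∃ T ∈ A, mpsi ψ T ≤ n ∧ Gt T = c}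

/-- `G_{ψ,A}(n)` -/
def Gfun (ψ : PBCM) (A : Set (Table 2)) (n : ℕ) : ℕ := sSup (GSet ψ A n)

/-! ### The tables `T_k` and `T_k^*` built from the triangle-shaped graph `G_k` -/

/-- `m(k) = k(k+1)/2` : number of nodes of `G_k` -/
def mnum (k : ℕ) : ℕ := k * (k + 1) / 2

/-- the layer of node `i` of `G_k` : the unique `L` with `m(L-1) < i ≤ m(L)` -/
def layer (i : ℕ) : ℕ := sInf {L | i ≤ mnum L}

/-- left child `l(i) = i + layer i`; right child `p(i) = i + layer i + 1` -/
def lchild (i : ℕ) : ℕ := i + layer i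

def rchild (i : ℕ) : ℕ := i + layer i + 1

/-- the map `ν_k : E_2^{m(k)} → P(ω)` -/
def nuk (k : ℕ) (δ : ℕ → ℕ) : Finset ℕ :=
  (Finset.range (mnum k + 1)).filter fun i =>
    if i = 0 then δ 1 = 0
    else if layer i = k then δ i = 1
    else δ i = 1 ∧ δ (lchild i) = 0 ∧ δ (rchild i) = 0

/-- all tuples over `E_k` supported on the attribute set `s` -/
def allRows (k : ℕ) (s : Finset ℕ) : Finset (ℕ → ℕ) :=
  (s.pi fun _ => Finset.range k).image fun f i => if h : i ∈ s then f i h else 0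

/-- the table with attribute set `s`, all possible rows, and decision labeling `d` -/
def fullTable (k : ℕ) (s : Finset ℕ) (d : (ℕ → ℕ) → Finset ℕ) : Table k where
  attrs := s
  rows := allRows k s
  dec := fun r => if (d r).Nonempty then d r else {0}
  rows_mem := by
    intro r hr
    simp only [allRows, Finset.mem_image] at hr
    obtain ⟨f, hf, rfl⟩ := hr
    refine ⟨fun i hi => ?_, fun i hi => ?_⟩
    · have h := (Finset.mem_pi.mp hf) i hi
      simp only [Finset.mem_range] at h
      simpa [hi] using h
    · simp [hi]
  dec_nonempty := by
    intro r _
    by_cases h : (d r).Nonempty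
    · simp [h]
    · simp [h]

/-- the complete table `T_k` with `m(k)` columns `f_1, …, f_{m(k)}` and `2^{m(k)}` rows,
each row `δ̄` labeled with `ν_k(δ̄)` (which is always nonempty) -/
def Tk (k : ℕ) : Table 2 := fullTable 2 (Finset.Icc 1 (mnum k)) (nuk k)

/-- the `j`-th node of the complete path of `G_k` determined by the choices `c` -/
def pathNode (c : ℕ → Bool) : ℕ → ℕ
  | 0 => 1
  | j + 1 => if c j then lchild (pathNode c j) else rchild (pathNode c j)

/-- `T_k^*` : the subtable of `T_k` whose rows are exactly the characteristic tuples
of complete paths of `G_k` -/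
def Tstar (k : ℕ) : Table 2 where
  attrs := (Tk k).attrs
  rows := (Tk k).rows.filter fun r =>
    ∃ c : ℕ → Bool, ∀ i ∈ Finset.Icc 1 (mnum k), (r i = 1 ↔ ∃ j < k, pathNode c j = i)
  dec := (Tk k).dec
  rows_mem := fun r hr => (Tk k).rows_mem r (Finset.mem_filter.mp hr).1
  dec_nonempty := fun r hr => (Tk k).dec_nonempty r (Finset.mem_filter.mp hr).1

/-- `r(T)` for a subtable `T` of `T_k^*` : the number of distinct decision sets
`ν_k(δ̄)` among the rows `δ̄` of `T` -/
def rnum (k : ℕ) (T : Table 2) : ℕ := (T.rows.image (nuk k)).card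

end


/-! Take an irreducible `(ψ,n)`-cover `U` of `T` of maximal cardinality `l_ψ(T,n)`. By
irreducibility every word `α ∈ U` has a private row of `T`, satisfied by `α` and by no other word
of `U`. Label every row with the set of (codes of) words of `U` it satisfies. The chains reading
the words of `U` form a nondeterministic decision tree of complexity at most `n`. In a
deterministic decision tree the private rows, whose decision sets are pairwise disjoint, must end
in pairwise different complete paths, and since `ψ` dominates the length there are at most
`k ^ ψ(Γ)` of these; hence `l_ψ(T,n) ≤ k ^ ψ^d(T*)`. -/

namespace DTree

variable {k : ℕ}

def chain (d : ℕ) : List (ℕ × ℕ) → DTree k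
  | [] => leaf d
  | q :: α => node q.1 0 (fun _ => q.2) (fun _ => chain d α)

@[simp]
lemma paths_chain (d : ℕ) (α : List (ℕ × ℕ)) : (chain d α : DTree k).paths = {(α, d)} := by
  induction α with
  | nil => rfl
  | cons q α ih =>
    ext ⟨β, e⟩
    simp [chain, paths, ih, eq_comm]

lemma wf_chain (d : ℕ) {α : List (ℕ × ℕ)} (h : ∀ q ∈ α, q.2 < k) : (chain d α : DTree k).wf := by
  induction α with
  | nil => trivial
  | cons q α ih => exact ⟨fun _ => h q (by simp), fun _ => ih fun q hq => h q (by simp [hq])⟩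

lemma attrs_chain_subset (d : ℕ) (α : List (ℕ × ℕ)) :
    (chain d α : DTree k).attrs ⊆ (α.map Prod.fst).toFinset := by
  induction α with
  | nil => simp [chain, attrs]
  | cons q α ih =>
    intro x hx
    simp only [chain, attrs, Finset.mem_insert, Finset.mem_biUnion] at hx
    rcases hx with rfl | ⟨_, _, hx⟩
    · simp
    · simpa using Or.inr (List.mem_toFinset.mp (ih hx))

def full (f : List (ℕ × ℕ) → ℕ) : List ℕ → DTree k
  | [] => leaf (f [])
  | a :: L => node a (k - 1) (fun i => i) (fun i => full (fun γ => f ((a, i) :: γ)) L)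

lemma mem_paths_full (hk : 0 < k) (L : List ℕ) (f : List (ℕ × ℕ) → ℕ) (p : List (ℕ × ℕ) × ℕ) :
    p ∈ (full f L : DTree k).paths ↔
      p.1.map Prod.fst = L ∧ (∀ q ∈ p.1, q.2 < k) ∧ p.2 = f p.1 := by
  induction L generalizing f p with
  | nil =>
    obtain ⟨γ, d⟩ := p
    simp only [full, paths, Set.mem_singleton_iff, Prod.mk.injEq, List.map_eq_nil_iff]
    constructor
    · rintro ⟨rfl, rfl⟩
      simp
    · rintro ⟨rfl, -, rfl⟩
      simp
  | cons a L ih =>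
    obtain ⟨γ, d⟩ := p
    simp only [full, paths, Set.mem_iUnion, Set.mem_image, ih]
    constructor
    · rintro ⟨i, ⟨δ, e⟩, ⟨hδ, hlt, he⟩, hp⟩
      simp only [Prod.mk.injEq] at hp he hδ hlt
      obtain ⟨rfl, rfl⟩ := hp
      have hi := i.isLt
      exact ⟨by simp [hδ], List.forall_mem_cons.mpr ⟨by dsimp; omega, hlt⟩, he⟩
    · rintro ⟨hγ, hlt, rfl⟩
      rcases γ with _ | ⟨⟨a', v⟩, δ⟩
      · simp at hγ
      simp only [List.map_cons, List.cons.injEq] at hγ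
      obtain ⟨rfl, hδ⟩ := hγ
      have hv : v < k - 1 + 1 := by have : v < k := hlt _ List.mem_cons_self; omega
      exact ⟨⟨v, hv⟩, (δ, f ((a', v) :: δ)), ⟨hδ, fun q hq => hlt q (by simp [hq]), rfl⟩, rfl⟩

lemma wf_full (hk : 0 < k) (f : List (ℕ × ℕ) → ℕ) (L : List ℕ) : (full f L : DTree k).wf := by
  induction L generalizing f with
  | nil => trivial
  | cons a L ih => exact ⟨fun i => by have := i.isLt; dsimp only; omega, fun _ => ih _⟩

lemma det_full (f : List (ℕ × ℕ) → ℕ) (L : List ℕ) : (full f L : DTree k).det := by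
  induction L generalizing f with
  | nil => trivial
  | cons a L ih => exact ⟨fun i j h => Fin.ext h, fun _ => ih _⟩

lemma attrs_full_subset (f : List (ℕ × ℕ) → ℕ) (L : List ℕ) :
    (full f L : DTree k).attrs ⊆ L.toFinset := by
  induction L generalizing f with
  | nil => simp [full, attrs]
  | cons a L ih =>
    intro x hx
    simp only [full, attrs, Finset.mem_insert, Finset.mem_biUnion] at hx
    rcases hx with rfl | ⟨_, _, hx⟩
    · simp
    · simpa using Or.inr (List.mem_toFinset.mp (ih _ hx))

def pathsF : DTree k → Finset (List (ℕ × ℕ) × ℕ)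
  | leaf d => {([], d)}
  | node a _ lab ch =>
    Finset.univ.biUnion fun i => (ch i).pathsF.image fun p => ((a, lab i) :: p.1, p.2)

@[simp, norm_cast]
lemma coe_pathsF (D : DTree k) : (D.pathsF : Set (List (ℕ × ℕ) × ℕ)) = D.paths := by
  induction D with
  | leaf d => simp [pathsF, paths]
  | node a m lab ch ih => simp [pathsF, paths, ← ih]

lemma pathsF_nonempty (D : DTree k) : D.pathsF.Nonempty := by
  induction D with
  | leaf d => simp [pathsF]
  | node a m lab ch ih => simpa [pathsF] using ⟨0, ih 0⟩

lemma mem_pathsF_node {a m : ℕ} {lab : Fin (m + 1) → ℕ} {ch : Fin (m + 1) → DTree k}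
    (i : Fin (m + 1)) {p : List (ℕ × ℕ) × ℕ} (hp : p ∈ (ch i).pathsF) :
    ((a, lab i) :: p.1, p.2) ∈ (node a m lab ch).pathsF :=
  Finset.mem_biUnion.mpr ⟨i, Finset.mem_univ i, Finset.mem_image_of_mem _ hp⟩

lemma card_pathsF_le_pow (hk : 0 < k) {D : DTree k} (hwf : D.wf) (hdet : D.det) {h : ℕ}
    (hlen : ∀ p ∈ D.pathsF, p.1.length ≤ h) : D.pathsF.card ≤ k ^ h := by
  induction D generalizing h with
  | leaf d => simpa [pathsF] using Nat.one_le_pow _ _ hk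
  | node a m lab ch ih =>
    obtain _ | h := h
    · obtain ⟨p, hp⟩ := (ch 0).pathsF_nonempty
      simpa using hlen _ (mem_pathsF_node 0 hp)
    have hm : m + 1 ≤ k := by
      simpa using Fintype.card_le_of_injective (fun i => (⟨lab i, hwf.1 i⟩ : Fin k))
        fun i j hij => hdet.1 (Fin.val_eq_of_eq hij)
    calc (node a m lab ch).pathsF.card
        ≤ ∑ i : Fin (m + 1), ((ch i).pathsF.image fun p => ((a, lab i) :: p.1, p.2)).card :=
          Finset.card_biUnion_le
      _ ≤ ∑ _i : Fin (m + 1), k ^ h := Finset.sum_le_sum fun i _ =>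
          Finset.card_image_le.trans <| ih i (hwf.2 i) (hdet.2 i) fun p hp => by
            simpa using hlen _ (mem_pathsF_node i hp)
      _ = (m + 1) * k ^ h := by simp
      _ ≤ k ^ (h + 1) := by rw [pow_succ']; exact Nat.mul_le_mul_right _ hm

end DTree

namespace KTree

variable {k : ℕ}

def pathsF (Γ : KTree k) : Finset (List (ℕ × ℕ) × ℕ) :=
  Finset.univ.biUnion fun i => (Γ.sub i).pathsF

@[simp, norm_cast]
lemma coe_pathsF (Γ : KTree k) : (Γ.pathsF : Set (List (ℕ × ℕ) × ℕ)) = Γ.paths := by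
  simp [pathsF, paths]

-- The list of (word, decision) pairs is passed as `p :: w` because the root of a `KTree` has at
-- least one outgoing edge.
def chains (p : List (ℕ × ℕ) × ℕ) (w : List (List (ℕ × ℕ) × ℕ)) : KTree k where
  n := w.length
  sub i := DTree.chain ((p :: w).get i).2 ((p :: w).get i).1

lemma mem_paths_chains {p x : List (ℕ × ℕ) × ℕ} {w : List (List (ℕ × ℕ) × ℕ)} :
    x ∈ (chains p w : KTree k).paths ↔ x ∈ p :: w := by
  simp only [paths, chains, DTree.paths_chain, Set.mem_iUnion, Set.mem_singleton_iff]
  exact ⟨fun ⟨_, hi⟩ => hi ▸ List.get_mem _ _,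
    fun hx => (List.mem_iff_get.mp hx).imp fun _ => Eq.symm⟩

lemma wf_chains {p : List (ℕ × ℕ) × ℕ} {w : List (List (ℕ × ℕ) × ℕ)}
    (h : ∀ x ∈ p :: w, ∀ q ∈ x.1, q.2 < k) : (chains p w : KTree k).wf :=
  fun _ => DTree.wf_chain _ (h _ (List.get_mem _ _))

lemma attrs_chains_subset {p : List (ℕ × ℕ) × ℕ} {w : List (List (ℕ × ℕ) × ℕ)} {s : Finset ℕ}
    (h : ∀ x ∈ p :: w, ∀ q ∈ x.1, q.1 ∈ s) : (chains p w : KTree k).attrs ⊆ s :=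
  Finset.biUnion_subset.mpr fun i _ => (DTree.attrs_chain_subset _ _).trans fun a ha => by
    obtain ⟨q, hq, rfl⟩ := List.mem_map.mp (List.mem_toFinset.mp ha)
    exact h _ (List.get_mem _ _) q hq

end KTree

lemma le_treeComp {k : ℕ} (ψ : PBCM) {Γ : KTree k} {p : List (ℕ × ℕ) × ℕ} (hp : p ∈ Γ.paths) :
    ψ.onWord p.1 ≤ treeComp ψ Γ := by
  refine le_csSup ?_ ⟨p, hp, rfl⟩
  have hfin : Γ.paths.Finite := by simpa only [← KTree.coe_pathsF] using Γ.pathsF.finite_toSet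
  simpa only [Set.image, eq_comm] using (hfin.image fun p => ψ.onWord p.1).bddAbove

lemma treeComp_le {k : ℕ} (ψ : PBCM) {Γ : KTree k} {c : ℕ} (h : ∀ p ∈ Γ.paths, ψ.onWord p.1 ≤ c) :
    treeComp ψ Γ ≤ c :=
  csSup_le' <| by rintro _ ⟨p, hp, rfl⟩; exact h p hp

lemma card_pathsF_le_pow_treeComp {k : ℕ} (hk : 0 < k) (ψ : BCM) {Γ : KTree k} (hwf : Γ.wf)
    (hn : Γ.n = 0) (hdet : ∀ i, (Γ.sub i).det) : Γ.pathsF.card ≤ k ^ treeComp ψ.toPBCM Γ := by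
  have hlen : ∀ p ∈ Γ.pathsF, p.1.length ≤ treeComp ψ.toPBCM Γ := fun p hp =>
    calc p.1.length = (p.1.map Prod.fst).length := (List.length_map _).symm
      _ ≤ ψ.onWord p.1 := ψ.bdd _
      _ ≤ treeComp ψ.toPBCM Γ := le_treeComp ψ.toPBCM (by simpa [← KTree.coe_pathsF] using hp)
  calc Γ.pathsF.card ≤ ∑ i : Fin (Γ.n + 1), (Γ.sub i).pathsF.card := Finset.card_biUnion_le
    _ ≤ ∑ _i : Fin (Γ.n + 1), k ^ treeComp ψ.toPBCM Γ := Finset.sum_le_sum fun i _ =>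
        DTree.card_pathsF_le_pow hk (hwf i) (hdet i) fun p hp =>
          hlen p (Finset.mem_biUnion.mpr ⟨i, Finset.mem_univ i, hp⟩)
    _ = k ^ treeComp ψ.toPBCM Γ := by simp [hn]

namespace Table

variable {k : ℕ}

lemma eq_of_mem_applyWord_of_attrs_subset {T : Table k} {γ : List (ℕ × ℕ)}
    (hγ : T.attrs ⊆ (γ.map Prod.fst).toFinset) {r₁ r₂ : ℕ → ℕ}
    (h₁ : r₁ ∈ (T.applyWord γ).rows) (h₂ : r₂ ∈ (T.applyWord γ).rows) : r₁ = r₂ := by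
  obtain ⟨h₁T, h₁γ⟩ := Finset.mem_filter.mp h₁
  obtain ⟨h₂T, h₂γ⟩ := Finset.mem_filter.mp h₂
  funext i
  by_cases hi : i ∈ T.attrs
  · obtain ⟨q, hq, rfl⟩ := List.mem_map.mp (List.mem_toFinset.mp (hγ hi))
    rw [h₁γ q hq, h₂γ q hq]
  · rw [(T.rows_mem r₁ h₁T).2 i hi, (T.rows_mem r₂ h₂T).2 i hi]

lemma hasCommon_applyWord_of_attrs_subset {T : Table k} {γ : List (ℕ × ℕ)}
    (hγ : T.attrs ⊆ (γ.map Prod.fst).toFinset) : (T.applyWord γ).hasCommon := by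
  obtain hempty | ⟨r, hr⟩ := (T.applyWord γ).rows.eq_empty_or_nonempty
  · exact ⟨0, by simp [hempty]⟩
  obtain ⟨d, hd⟩ := (T.applyWord γ).dec_nonempty r hr
  exact ⟨d, fun r' hr' => eq_of_mem_applyWord_of_attrs_subset hγ hr hr' ▸ hd⟩

end Table

section DecisionTrees

variable {k : ℕ}

lemma exists_isDDT (hk : 0 < k) {T : Table k} (hT : T.rows.Nonempty) : ∃ Γ, isDDT T Γ := by
  set L := T.attrs.sort (· ≤ ·)
  have hcommon : ∀ γ : List (ℕ × ℕ), ∃ d, γ.map Prod.fst = L →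
      ∀ r ∈ (T.applyWord γ).rows, d ∈ T.dec r := fun γ => by
    by_cases hγ : γ.map Prod.fst = L
    · obtain ⟨d, hd⟩ := Table.hasCommon_applyWord_of_attrs_subset (T := T) (γ := γ)
        (by simp [hγ, L])
      exact ⟨d, fun _ => hd⟩
    · exact ⟨0, fun h => absurd h hγ⟩
  choose f hf using hcommon
  -- the complete tree on all attributes: each of its paths selects at most one row
  have hpaths : ∀ p, p ∈ (⟨0, fun _ => DTree.full f L⟩ : KTree k).paths ↔
      p.1.map Prod.fst = L ∧ (∀ q ∈ p.1, q.2 < k) ∧ p.2 = f p.1 := fun p => by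
    simp [KTree.paths, DTree.mem_paths_full hk]
  refine ⟨⟨0, fun _ => DTree.full f L⟩,
    ⟨hT, fun _ => DTree.wf_full hk f L, ?_, ?_, ?_⟩, rfl, fun _ => DTree.det_full f L⟩
  · simpa [KTree.attrs, L] using DTree.attrs_full_subset (k := k) f L
  · intro r hr
    refine ⟨(L.map fun a => (a, r a), f _),
      (hpaths _).mpr ⟨by simp [Function.comp_def], ?_, rfl⟩, ?_⟩
    · simp only [List.mem_map]
      rintro _ ⟨a, ha, rfl⟩
      exact (T.rows_mem r hr).1 a (by simpa [L] using ha)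
    · simp [Table.rowSat]
  · intro p hp
    obtain ⟨hL, -, hd⟩ := (hpaths p).mp hp
    exact Or.inr (hd ▸ hf p.1 hL)

lemma psiA_le_treeComp (ψ : PBCM) {T : Table k} {Γ : KTree k} (hΓ : isNDT T Γ) :
    psiA ψ T ≤ treeComp ψ Γ :=
  Nat.sInf_le ⟨Γ, hΓ, rfl⟩

lemma exists_isDDT_treeComp_eq_psiD (hk : 0 < k) (ψ : PBCM) {T : Table k}
    (hT : T.rows.Nonempty) :
    ∃ Γ, isDDT T Γ ∧ treeComp ψ Γ = psiD ψ T := by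
  obtain ⟨Γ, hΓ⟩ := exists_isDDT hk hT
  exact Nat.sInf_mem (s := {c | ∃ Γ, isDDT T Γ ∧ treeComp ψ Γ = c}) ⟨_, Γ, hΓ, rfl⟩

lemma card_le_card_pathsF {T : Table k} {Γ : KTree k} (hΓ : isNDT T Γ) {S : Finset (ℕ → ℕ)}
    (hS : S ⊆ T.rows) (hdisj : (S : Set (ℕ → ℕ)).PairwiseDisjoint T.dec) :
    S.card ≤ Γ.pathsF.card := by
  have hcover : ∀ r ∈ S, ∃ p ∈ Γ.pathsF, Table.rowSat r p.1 := fun r hr => by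
    simpa only [← KTree.coe_pathsF, Finset.mem_coe] using hΓ.2.2.2.1 r (hS hr)
  choose! φ hφ hsat using hcover
  refine Finset.card_le_card_of_injOn φ hφ fun r₁ h₁ r₂ h₂ heq => ?_
  -- two different rows on one path would share its terminal decision
  by_contra hne
  have hmem : ∀ r ∈ S, φ r = φ r₂ → r ∈ (T.applyWord (φ r₂).1).rows := fun r hr hφr =>
    Finset.mem_filter.mpr ⟨hS hr, hφr ▸ hsat r hr⟩
  rcases hΓ.2.2.2.2 (φ r₂) (by simpa [← KTree.coe_pathsF] using hφ r₂ h₂) with hempty | hcom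
  · simpa [hempty] using hmem r₂ h₂ rfl
  · exact Finset.disjoint_left.mp (hdisj h₁ h₂ hne) (hcom r₁ (hmem r₁ h₁ heq))
      (hcom r₂ (hmem r₂ h₂ rfl))

lemma card_le_pow_psiD (hk : 0 < k) (ψ : BCM) {T : Table k} (hT : T.rows.Nonempty)
    {S : Finset (ℕ → ℕ)} (hS : S ⊆ T.rows) (hdisj : (S : Set (ℕ → ℕ)).PairwiseDisjoint T.dec) :
    S.card ≤ k ^ psiD ψ.toPBCM T := by
  obtain ⟨Γ, ⟨hΓ, hn, hdet⟩, hc⟩ := exists_isDDT_treeComp_eq_psiD hk ψ.toPBCM hT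
  exact hc ▸ (card_le_card_pathsF hΓ hS hdisj).trans
    (card_pathsF_le_pow_treeComp hk ψ hΓ.2.1 hn hdet)

end DecisionTrees

section Covers

variable {k : ℕ} {ψ : PBCM} {n : ℕ} {T : Table k} {U : Finset (List (ℕ × ℕ))}

lemma exists_isIrredCover_card_eq_lpsi (hl : 0 < lpsi ψ T n) :
    ∃ U, isIrredCover ψ n T U ∧ U.card = lpsi ψ T n := by
  set s := {c | ∃ U, isIrredCover ψ n T U ∧ U.card = c}
  have hne : s.Nonempty := by
    by_contra h
    simp [lpsi, s, Set.not_nonempty_iff_eq_empty.mp h] at hl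
  have hbdd : BddAbove s := by
    by_contra h
    simp [lpsi, s, Nat.sSup_of_not_bddAbove h] at hl
  exact Nat.sSup_mem hne hbdd

lemma isIrredCover.exists_private_row (hU : isIrredCover ψ n T U) {α : List (ℕ × ℕ)} (hα : α ∈ U) :
    ∃ r ∈ T.rows, Table.rowSat r α ∧ ∀ β ∈ U, Table.rowSat r β → β = α := by
  have hnot := hU.2 _ (Finset.erase_ssubset hα)
  simp only [isCover, not_and, not_forall, not_exists] at hnot
  obtain ⟨r, hr, hnone⟩ := hnot fun β hβ => hU.1.1 β (Finset.mem_of_mem_erase hβ)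
  have honly : ∀ β ∈ U, Table.rowSat r β → β = α := fun β hβ hsat => by
    by_contra hne
    exact hnone β (Finset.mem_erase.mpr ⟨hne, hβ⟩) hsat
  obtain ⟨γ, hγ, hsat⟩ := hU.1.2 r hr
  exact ⟨r, hr, honly γ hγ hsat ▸ hsat, honly⟩

lemma psiA_le_of_isCover (hU : isCover ψ n T U) (hT : T.rows.Nonempty) (d : List (ℕ × ℕ) → ℕ)
    (hd : ∀ α ∈ U, ∀ r ∈ (T.applyWord α).rows, d α ∈ T.dec r) : psiA ψ T ≤ n := by
  have hUne : U.Nonempty := hT.elim fun r hr => (hU.2 r hr).elim fun α h => ⟨α, h.1⟩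
  obtain ⟨α, w, hw⟩ := List.exists_cons_of_ne_nil (Finset.toList_eq_nil.not.mpr hUne.ne_empty)
  have hmem : ∀ x, x ∈ (α, d α) :: w.map (fun β => (β, d β)) ↔ ∃ β ∈ U, (β, d β) = x := by
    intro x
    rw [show ((α, d α) :: w.map fun β => (β, d β)) = U.toList.map fun β => (β, d β) by
      rw [hw, List.map_cons]]
    simp
  let Γ : KTree k := KTree.chains (α, d α) (w.map fun β => (β, d β))
  have hpaths : ∀ x, x ∈ Γ.paths ↔ ∃ β ∈ U, (β, d β) = x := fun x =>
    KTree.mem_paths_chains.trans (hmem x)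
  have hΓ : isNDT T Γ := by
    refine ⟨hT, KTree.wf_chains ?_, KTree.attrs_chains_subset ?_, ?_, ?_⟩
    · rintro x hx q hq
      obtain ⟨β, hβ, rfl⟩ := (hmem x).mp hx
      exact ((hU.1 β hβ).1 q hq).2
    · rintro x hx q hq
      obtain ⟨β, hβ, rfl⟩ := (hmem x).mp hx
      exact ((hU.1 β hβ).1 q hq).1
    · intro r hr
      obtain ⟨β, hβ, hsat⟩ := hU.2 r hr
      exact ⟨(β, d β), (hpaths _).mpr ⟨β, hβ, rfl⟩, hsat⟩
    · intro x hx
      obtain ⟨β, hβ, rfl⟩ := (hpaths x).mp hx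
      exact Or.inr (hd β hβ)
  refine (psiA_le_treeComp ψ hΓ).trans (treeComp_le ψ fun x hx => ?_)
  obtain ⟨β, hβ, rfl⟩ := (hpaths x).mp hx
  exact (hU.1 β hβ).2

end Covers

/-- The table `J(ν,T)` where `ν(δ̄)` is the set of codes of the words of `U` satisfied by `δ̄`. -/
noncomputable def coverTable {k : ℕ} (T : Table k) (U : Finset (List (ℕ × ℕ)))
    (hU : ∀ r ∈ T.rows, ∃ α ∈ U, Table.rowSat r α) : Table k where
  attrs := T.attrs
  rows := T.rows
  dec r := (U.filter fun α => Table.rowSat r α).image Encodable.encode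
  rows_mem := T.rows_mem
  dec_nonempty r hr := by
    obtain ⟨α, hα, hsat⟩ := hU r hr
    exact ⟨_, Finset.mem_image_of_mem _ (Finset.mem_filter.mpr ⟨hα, hsat⟩)⟩

section CoverTable

variable {k : ℕ} {n : ℕ} {T : Table k} {U : Finset (List (ℕ × ℕ))}

lemma coverTable_dec_eq_singleton (hU : ∀ r ∈ T.rows, ∃ α ∈ U, Table.rowSat r α)
    {r : ℕ → ℕ} {α : List (ℕ × ℕ)} (hα : α ∈ U) (hsat : Table.rowSat r α)
    (honly : ∀ β ∈ U, Table.rowSat r β → β = α) :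
    (coverTable T U hU).dec r = {Encodable.encode α} := by
  ext c
  simp only [coverTable, Finset.mem_image, Finset.mem_filter, Finset.mem_singleton]
  constructor
  · rintro ⟨β, ⟨hβ, hsatβ⟩, rfl⟩
    rw [honly β hβ hsatβ]
  · rintro rfl
    exact ⟨α, ⟨hα, hsat⟩, rfl⟩

lemma psiA_coverTable_le {ψ : PBCM} (hU : isCover ψ n T U) (hT : T.rows.Nonempty) :
    psiA ψ (coverTable T U hU.2) ≤ n :=
  psiA_le_of_isCover (T := coverTable T U hU.2) hU hT Encodable.encode fun _ hα _ hr =>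
    Finset.mem_image_of_mem _ (Finset.mem_filter.mpr ⟨hα, (Finset.mem_filter.mp hr).2⟩)

lemma card_le_pow_psiD_coverTable (hk : 0 < k) (ψ : BCM) (hU : isIrredCover ψ.toPBCM n T U)
    (hT : T.rows.Nonempty) : U.card ≤ k ^ psiD ψ.toPBCM (coverTable T U hU.1.2) := by
  choose! ρ hρ hsat honly using fun α (hα : α ∈ U) => hU.exists_private_row hα
  have hinj : Set.InjOn ρ U := fun α hα β hβ h => (honly α hα β hβ (h ▸ hsat β hβ)).symm
  have hdisj : (U : Set (List (ℕ × ℕ))).PairwiseDisjoint ((coverTable T U hU.1.2).dec ∘ ρ) :=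
    fun α hα β hβ hne => by
      change Disjoint ((coverTable T U hU.1.2).dec (ρ α)) ((coverTable T U hU.1.2).dec (ρ β))
      rw [coverTable_dec_eq_singleton hU.1.2 hα (hsat α hα) (honly α hα),
        coverTable_dec_eq_singleton hU.1.2 hβ (hsat β hβ) (honly β hβ)]
      simpa using hne
  calc U.card = (U.image ρ).card := (Finset.card_image_of_injOn hinj).symm
    _ ≤ k ^ psiD ψ.toPBCM (coverTable T U hU.1.2) :=
      card_le_pow_psiD (T := coverTable T U hU.1.2) hk ψ hT (Finset.image_subset_iff.mpr hρ)
        (by rw [Finset.coe_image, hinj.pairwiseDisjoint_image]; exact hdisj)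

end CoverTable

theorem stmt7_general {k : ℕ} (hk : 2 ≤ k)
    (ψ : BCM) (T : Table k) (n : ℕ) (hl : 0 < lpsi ψ.toPBCM T n) :
    ∃ T' : Table k, T'.attrs = T.attrs ∧ T'.rows = T.rows ∧
      psiA ψ.toPBCM T' ≤ n ∧
      Real.logb k (lpsi ψ.toPBCM T n : ℝ) ≤ (psiD ψ.toPBCM T' : ℝ) := by
  obtain ⟨U, hU, hcard⟩ := exists_isIrredCover_card_eq_lpsi hl
  obtain ⟨α, hα⟩ : U.Nonempty := Finset.card_pos.mp (hcard ▸ hl)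
  obtain ⟨r, hr, -⟩ := hU.exists_private_row hα
  refine ⟨coverTable T U hU.1.2, rfl, rfl, psiA_coverTable_le hU.1 ⟨r, hr⟩, ?_⟩
  have hpow := hcard ▸ card_le_pow_psiD_coverTable (by omega) ψ hU ⟨r, hr⟩
  rw [Real.logb_le_iff_le_rpow (by exact_mod_cast hk) (by exact_mod_cast hl), Real.rpow_natCast]
  exact_mod_cast hpow

/-- **Lemma (7M1).** If `T ∈ A` and `l_ψ(T,n) > 0` then there is a mapping `ν` such that the
table `T* = J(ν,T)` (same attributes and rows as `T`, decisions given by `ν`) satisfies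
`ψ^a(T*) ≤ n` and `ψ^d(T*) ≥ log_k l_ψ(T,n)`. -/
theorem stmt7 {k : ℕ} (hk : 2 ≤ k) (A : Set (Table k))
    (hclosed : IsClosedClass A) (hnontriv : NontrivialClass A)
    (ψ : BCM) (T : Table k) (hT : T ∈ A) (n : ℕ) (hl : 0 < lpsi ψ.toPBCM T n) :
    ∃ T' : Table k, T'.attrs = T.attrs ∧ T'.rows = T.rows ∧
      psiA ψ.toPBCM T' ≤ n ∧
      Real.logb k (lpsi ψ.toPBCM T n : ℝ) ≤ (psiD ψ.toPBCM T' : ℝ) :=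
  stmt7_general hk ψ T n hl
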